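/- arXiv:2110.09502 — 4 statements merged into one kernel-verified Lean document; each statement's English description precedes it below -/
import Mathlib

section
/- For every α > 0 and every real μ, the integral of (η(μ+z, α) - μ)^2 φ(z) over z from -∞ to +∞ equals (μ-α)φ(α+μ) - (μ+α)φ(α-μ) + (α^2+1-μ^2)[Φ(-α-μ) + Φ(-α+μ)] + μ^2. -/
open MeasureTheory Filter

/-- Standard normal probability density function. -/
noncomputable def stdNormalPDF (x : ℝ) : ℝ :=
  (Real.sqrt (2 * Real.pi))⁻¹ * Real.exp (-(x ^ 2) / 2)

/-- Standard normal cumulative distribution function. -/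
noncomputable def stdNormalCDF (x : ℝ) : ℝ :=
  ∫ t in Set.Iic x, stdNormalPDF t

/-- Soft-thresholding function `η(x, λ) = sign(x) · max(|x| − λ, 0)`. -/
noncomputable def softThreshold (x lam : ℝ) : ℝ :=
  Real.sign x * max (|x| - lam) 0

/-!
The residual `η(μ + z, α) - μ` equals `z + α`, `-μ` and `z - α` on `z ≤ -α - μ`, in between, and
on `z ≥ α - μ`. So the integrand is `μ² φ` plus a correction on each tail, and the reflection
`(z, μ) ↦ (-z, -μ)` turns the upper correction into the lower one. The lower correction is the
integral of `((z + α)² - μ²) φ(z)` over `(-∞, -α - μ]`, and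
`(1 + α² - μ²) Φ(z) - (z + 2α) φ(z)` is an antiderivative of that integrand vanishing at `-∞`.
-/

open Set Topology

lemma stdNormalPDF_neg (x : ℝ) : stdNormalPDF (-x) = stdNormalPDF x := by
  simp [stdNormalPDF]

lemma continuous_stdNormalPDF : Continuous stdNormalPDF := by
  unfold stdNormalPDF
  fun_prop

lemma hasDerivAt_stdNormalPDF (x : ℝ) : HasDerivAt stdNormalPDF (-x * stdNormalPDF x) x :=
  ((((hasDerivAt_pow 2 x).fun_neg.div_const 2).exp).const_mul (Real.sqrt (2 * Real.pi))⁻¹)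
    |>.congr_deriv (by simp only [stdNormalPDF]; ring)

lemma integrable_pow_mul_stdNormalPDF (n : ℕ) :
    Integrable fun z : ℝ => z ^ n * stdNormalPDF z := by
  have h := (integrable_rpow_mul_exp_neg_mul_sq (b := 1 / 2) (s := n) (by norm_num)
    (by linarith [n.cast_nonneg (α := ℝ)])).const_mul (Real.sqrt (2 * Real.pi))⁻¹
  refine h.congr (ae_of_all _ fun z => ?_)
  simp only [Real.rpow_natCast, stdNormalPDF]
  ring_nf

lemma integrable_stdNormalPDF : Integrable stdNormalPDF := by
  simpa using integrable_pow_mul_stdNormalPDF 0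

lemma integrable_quadratic_mul_stdNormalPDF (a b c : ℝ) :
    Integrable fun z : ℝ => (a * z ^ 2 + b * z + c) * stdNormalPDF z := by
  refine ((((integrable_pow_mul_stdNormalPDF 2).const_mul a).add
    ((integrable_pow_mul_stdNormalPDF 1).const_mul b)).add
    (integrable_stdNormalPDF.const_mul c)).congr (ae_of_all _ fun z => ?_)
  simp only [Pi.add_apply]
  ring

lemma integral_stdNormalPDF : ∫ z : ℝ, stdNormalPDF z = 1 := by
  have h : ∀ z : ℝ, -(z ^ 2) / 2 = -(1 / 2) * z ^ 2 := fun z => by ring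
  simp only [stdNormalPDF, integral_const_mul, h, integral_gaussian]
  rw [div_div_eq_mul_div, div_one, ← Real.sqrt_inv, ← Real.sqrt_mul (by positivity),
    mul_comm Real.pi, inv_mul_cancel₀ (by positivity), Real.sqrt_one]

lemma hasDerivAt_stdNormalCDF (x : ℝ) : HasDerivAt stdNormalCDF (stdNormalPDF x) x := by
  have h : stdNormalCDF = fun y => stdNormalCDF 0 + ∫ t in (0 : ℝ)..y, stdNormalPDF t := by
    ext y
    rw [← intervalIntegral.integral_Iic_sub_Iic integrable_stdNormalPDF.integrableOn
      integrable_stdNormalPDF.integrableOn, stdNormalCDF, stdNormalCDF, add_sub_cancel]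
  rw [h]
  exact (continuous_stdNormalPDF.integral_hasStrictDerivAt 0 x).hasDerivAt.const_add _

lemma tendsto_stdNormalCDF_atBot : Tendsto stdNormalCDF atBot (𝓝 0) :=
  tendsto_integral_Iic_zero tendsto_id

lemma tendsto_add_const_mul_stdNormalPDF_atBot (c : ℝ) :
    Tendsto (fun z : ℝ => (z + c) * stdNormalPDF z) atBot (𝓝 0) :=
  tendsto_zero_of_hasDerivAt_of_integrableOn_Iic (a := 0)
    (f' := fun z => 1 * stdNormalPDF z + (z + c) * (-z * stdNormalPDF z))
    (fun z _ => ((hasDerivAt_id z).add_const c).mul (hasDerivAt_stdNormalPDF z))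
    ((integrable_quadratic_mul_stdNormalPDF (-1) (-c) 1).congr
      (ae_of_all _ fun z => by ring)).integrableOn
    ((integrable_quadratic_mul_stdNormalPDF 0 1 c).congr
      (ae_of_all _ fun z => by ring)).integrableOn

lemma integral_Iic_sq_add_sub_mul_stdNormalPDF (b c d : ℝ) :
    ∫ z in Iic b, ((z + c) ^ 2 - d) * stdNormalPDF z =
      (1 + c ^ 2 - d) * stdNormalCDF b - (b + 2 * c) * stdNormalPDF b := by
  have hderiv (z : ℝ) : HasDerivAt
      (fun z => (1 + c ^ 2 - d) * stdNormalCDF z - (z + 2 * c) * stdNormalPDF z)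
      (((z + c) ^ 2 - d) * stdNormalPDF z) z :=
    (((hasDerivAt_stdNormalCDF z).const_mul _).sub
      (((hasDerivAt_id z).add_const (2 * c)).mul (hasDerivAt_stdNormalPDF z))).congr_deriv
      (by simp only [id]; ring)
  have hlim : Tendsto (fun z => (1 + c ^ 2 - d) * stdNormalCDF z - (z + 2 * c) * stdNormalPDF z)
      atBot (𝓝 0) := by
    simpa using (tendsto_stdNormalCDF_atBot.const_mul (1 + c ^ 2 - d)).sub
      (tendsto_add_const_mul_stdNormalPDF_atBot (2 * c))
  have hint : Integrable fun z => ((z + c) ^ 2 - d) * stdNormalPDF z :=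
    (integrable_quadratic_mul_stdNormalPDF 1 (2 * c) (c ^ 2 - d)).congr
      (ae_of_all _ fun z => by ring)
  rw [integral_Iic_of_hasDerivAt_of_tendsto' (fun z _ => hderiv z) hint.integrableOn hlim,
    sub_zero]

lemma softThreshold_of_le_neg {x lam : ℝ} (hlam : 0 ≤ lam) (hx : x ≤ -lam) :
    softThreshold x lam = x + lam := by
  rcases (hx.trans (neg_nonpos.2 hlam)).lt_or_eq with hneg | rfl
  · rw [softThreshold, Real.sign_of_neg hneg, abs_of_neg hneg, max_eq_left (by linarith)]
    ring
  · simp [softThreshold, le_antisymm (by linarith) hlam]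

lemma softThreshold_of_le {x lam : ℝ} (hlam : 0 ≤ lam) (hx : lam ≤ x) :
    softThreshold x lam = x - lam := by
  rcases (hlam.trans hx).lt_or_eq with hpos | rfl
  · rw [softThreshold, Real.sign_of_pos hpos, abs_of_pos hpos, max_eq_left (by linarith)]
    ring
  · simp [softThreshold, le_antisymm hx hlam]

lemma softThreshold_of_abs_le {x lam : ℝ} (hx : |x| ≤ lam) : softThreshold x lam = 0 := by
  rw [softThreshold, max_eq_right (sub_nonpos.2 hx), mul_zero]

noncomputable def lowerTailCorrection (α μ : ℝ) : ℝ → ℝ :=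
  (Iic (-α - μ)).indicator fun z => ((z + α) ^ 2 - μ ^ 2) * stdNormalPDF z

lemma softThreshold_shift_sq_mul_stdNormalPDF_eq {α : ℝ} (hα : 0 < α) (μ z : ℝ) :
    (softThreshold (μ + z) α - μ) ^ 2 * stdNormalPDF z =
      μ ^ 2 * stdNormalPDF z + lowerTailCorrection α μ z + lowerTailCorrection α (-μ) (-z) := by
  simp only [lowerTailCorrection, indicator_apply, mem_Iic, stdNormalPDF_neg]
  rcases le_or_gt z (-α - μ) with hlow | hlow
  · rw [softThreshold_of_le_neg hα.le (by linarith), if_pos hlow, if_neg (by linarith)]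
    ring
  rcases le_or_gt (α - μ) z with hup | hup
  · rw [softThreshold_of_le hα.le (by linarith), if_neg (by linarith), if_pos (by linarith)]
    ring
  · rw [softThreshold_of_abs_le (abs_le.2 ⟨by linarith, by linarith⟩), if_neg (by linarith),
      if_neg (by linarith)]
    ring

lemma integrable_lowerTailCorrection (α μ : ℝ) : Integrable (lowerTailCorrection α μ) :=
  ((integrable_quadratic_mul_stdNormalPDF 1 (2 * α) (α ^ 2 - μ ^ 2)).congr
    (ae_of_all _ fun z => by ring)).indicator measurableSet_Iic

lemma integral_lowerTailCorrection (α μ : ℝ) :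
    ∫ z, lowerTailCorrection α μ z =
      (α ^ 2 + 1 - μ ^ 2) * stdNormalCDF (-α - μ) + (μ - α) * stdNormalPDF (α + μ) := by
  rw [lowerTailCorrection, integral_indicator measurableSet_Iic,
    integral_Iic_sq_add_sub_mul_stdNormalPDF, ← stdNormalPDF_neg (α + μ), neg_add']
  ring

theorem integral_softThreshold_shift_sq (α : ℝ) (hα : 0 < α) (μ : ℝ) :
    ∫ z : ℝ, (softThreshold (μ + z) α - μ) ^ 2 * stdNormalPDF z =
      (μ - α) * stdNormalPDF (α + μ) - (μ + α) * stdNormalPDF (α - μ)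
        + (α ^ 2 + 1 - μ ^ 2) * (stdNormalCDF (-α - μ) + stdNormalCDF (-α + μ)) + μ ^ 2 := by
  have hcentral := integrable_stdNormalPDF.const_mul (μ ^ 2)
  have hlower := integrable_lowerTailCorrection α μ
  have hsum : Integrable fun z => μ ^ 2 * stdNormalPDF z + lowerTailCorrection α μ z :=
    hcentral.add hlower
  have hupper := (integrable_lowerTailCorrection α (-μ)).comp_neg
  simp_rw [softThreshold_shift_sq_mul_stdNormalPDF_eq hα μ]
  rw [integral_add hsum hupper, integral_add hcentral hlower,
    integral_neg_eq_self (lowerTailCorrection α (-μ)), integral_const_mul, integral_stdNormalPDF,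
    integral_lowerTailCorrection, integral_lowerTailCorrection, neg_sq, sub_neg_eq_add,
    ← sub_eq_add_neg]
  ring
end

section
/- The limit as α → +∞ of α^3 [αφ(α) - (α^2+1)Φ(-α)] / φ(α) equals -2, where φ is the standard normal density and Φ the standard normal CDF. -/
/-!
Integration by parts against `φ`, using `φ' = -x φ`, gives for every `c` and `a > 0`
`Φ(-a) = (1/a - 1/a³ + 3/a⁵ - c/a⁷) φ(a) - ∫_{-∞}^{-a} ((15 - c)/x⁶ - 7c/x⁸) φ(x) dx`.
For `c = 0` and `c = 15` the remainder has a sign, which traps the Mills ratio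
`Φ(-α)/φ(α)` between `1/α - 1/α³ + 3/α⁵ - 15/α⁷` and `1/α - 1/α³ + 3/α⁵`.
Substituting these bounds puts the expression within `27/α²` of `-2` for `α ≥ 1`.
-/

open MeasureTheory Filter

open Set Topology

lemma stdNormalPDF_pos (x : ℝ) : 0 < stdNormalPDF x := by
  unfold stdNormalPDF
  positivity

lemma tendsto_stdNormalPDF_atBot : Tendsto stdNormalPDF atBot (𝓝 0) := by
  have hsq : Tendsto (fun x : ℝ => x ^ 2) atBot atTop := by
    simpa only [sq, id] using tendsto_id.atBot_mul_atBot₀ tendsto_id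
  have h : Tendsto (fun x : ℝ => -(x ^ 2) / 2) atBot atBot :=
    (tendsto_neg_atTop_atBot.comp hsq).atBot_div_const two_pos
  have := (Real.tendsto_exp_atBot.comp h).const_mul (Real.sqrt (2 * Real.pi))⁻¹
  rwa [mul_zero] at this

theorem integral_Iic_mul_stdNormalPDF_of_hasDerivAt {g g' : ℝ → ℝ} {b : ℝ}
    (hderiv : ∀ x ∈ Iic b, HasDerivAt g (g' x) x)
    (hint : IntegrableOn (fun x => (g' x - x * g x) * stdNormalPDF x) (Iic b))
    (hlim : Tendsto g atBot (𝓝 0)) :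
    ∫ x in Iic b, (g' x - x * g x) * stdNormalPDF x = g b * stdNormalPDF b := by
  have h := integral_Iic_of_hasDerivAt_of_tendsto' (f := fun x => g x * stdNormalPDF x)
    (fun x hx => ((hderiv x hx).mul (hasDerivAt_stdNormalPDF x)).congr_deriv (by ring)) hint
    (by simpa using hlim.mul tendsto_stdNormalPDF_atBot)
  simpa using h

lemma integrableOn_inv_pow_mul_stdNormalPDF {a : ℝ} (ha : 0 < a) (k : ℕ) :
    IntegrableOn (fun x => (x ^ k)⁻¹ * stdNormalPDF x) (Iic (-a)) := by
  refine integrable_stdNormalPDF.integrableOn.bdd_mul (c := (a ^ k)⁻¹)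
    (measurable_id.pow_const k).inv.aestronglyMeasurable ?_
  filter_upwards [self_mem_ae_restrict measurableSet_Iic] with x hx
  have hax : a ≤ |x| := by rw [abs_of_neg (by linarith [hx.out])]; linarith [hx.out]
  rw [norm_inv, norm_pow, Real.norm_eq_abs]
  gcongr

lemma tendsto_inv_pow_atBot_zero {k : ℕ} (hk : k ≠ 0) :
    Tendsto (fun x : ℝ => (x ^ k)⁻¹) atBot (𝓝 0) := by
  simpa [zero_pow hk] using (tendsto_inv_atBot_zero (𝕜 := ℝ)).pow k

theorem stdNormalCDF_neg_add_integral_eq (c : ℝ) {a : ℝ} (ha : 0 < a) :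
    stdNormalCDF (-a) +
        ∫ x in Iic (-a), ((15 - c) * (x ^ 6)⁻¹ - 7 * c * (x ^ 8)⁻¹) * stdNormalPDF x =
      (a⁻¹ - (a ^ 3)⁻¹ + 3 * (a ^ 5)⁻¹ - c * (a ^ 7)⁻¹) * stdNormalPDF a := by
  set g : ℝ → ℝ := fun x => -x⁻¹ + (x ^ 3)⁻¹ - 3 * (x ^ 5)⁻¹ + c * (x ^ 7)⁻¹
  set r : ℝ → ℝ := fun x => (15 - c) * (x ^ 6)⁻¹ - 7 * c * (x ^ 8)⁻¹
  -- `g'` is written as `1 + r + x g`, so that `g' - x g = 1 + r` syntactically.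
  have hderiv : ∀ x ∈ Iic (-a), HasDerivAt g (1 + r x + x * g x) x := by
    intro x hx
    have hx0 : x ≠ 0 := by linarith [hx.out]
    refine ((((hasDerivAt_inv hx0).neg.add ((hasDerivAt_pow 3 x).inv (pow_ne_zero 3 hx0))).sub
        (((hasDerivAt_pow 5 x).inv (pow_ne_zero 5 hx0)).const_mul 3)).add
        (((hasDerivAt_pow 7 x).inv (pow_ne_zero 7 hx0)).const_mul c)).congr_deriv ?_
    simp only [g, r]
    field_simp
    ring
  have hr : IntegrableOn (fun x => r x * stdNormalPDF x) (Iic (-a)) :=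
    (((integrableOn_inv_pow_mul_stdNormalPDF ha 6).const_mul (15 - c)).sub
      ((integrableOn_inv_pow_mul_stdNormalPDF ha 8).const_mul (7 * c))).congr
      (.of_forall fun x => by simp only [Pi.sub_apply, r]; ring)
  have hlim : Tendsto g atBot (𝓝 0) := by
    simpa using ((tendsto_inv_atBot_zero.neg.add (tendsto_inv_pow_atBot_zero three_ne_zero)).sub
      ((tendsto_inv_pow_atBot_zero (by norm_num : 5 ≠ 0)).const_mul 3)).add
      ((tendsto_inv_pow_atBot_zero (by norm_num : 7 ≠ 0)).const_mul c)
  have hint : IntegrableOn (fun x => (1 + r x) * stdNormalPDF x) (Iic (-a)) :=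
    (integrable_stdNormalPDF.integrableOn.add hr).congr
      (.of_forall fun x => by simp only [Pi.add_apply]; ring)
  have hibp := integral_Iic_mul_stdNormalPDF_of_hasDerivAt hderiv
    (by simpa only [add_sub_cancel_right] using hint) hlim
  simp only [add_sub_cancel_right, add_mul, one_mul] at hibp
  rw [integral_add integrable_stdNormalPDF.integrableOn hr, ← stdNormalCDF] at hibp
  rw [hibp, stdNormalPDF_neg]
  simp only [g]
  ring

theorem stdNormalCDF_neg_le {a : ℝ} (ha : 0 < a) :
    stdNormalCDF (-a) ≤ (a⁻¹ - (a ^ 3)⁻¹ + 3 * (a ^ 5)⁻¹) * stdNormalPDF a := by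
  have h := stdNormalCDF_neg_add_integral_eq 0 ha
  have hrem :
      0 ≤ ∫ x in Iic (-a), ((15 - 0) * (x ^ 6)⁻¹ - 7 * 0 * (x ^ 8)⁻¹) * stdNormalPDF x :=
    setIntegral_nonneg measurableSet_Iic fun x _ =>
      mul_nonneg (by norm_num; positivity) (stdNormalPDF_pos x).le
  linarith

theorem le_stdNormalCDF_neg {a : ℝ} (ha : 0 < a) :
    (a⁻¹ - (a ^ 3)⁻¹ + 3 * (a ^ 5)⁻¹ - 15 * (a ^ 7)⁻¹) * stdNormalPDF a ≤
      stdNormalCDF (-a) := by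
  have h := stdNormalCDF_neg_add_integral_eq 15 ha
  have hrem :
      ∫ x in Iic (-a), ((15 - 15) * (x ^ 6)⁻¹ - 7 * 15 * (x ^ 8)⁻¹) * stdNormalPDF x ≤ 0 :=
    setIntegral_nonpos measurableSet_Iic fun x _ =>
      mul_nonpos_of_nonpos_of_nonneg (by norm_num; positivity) (stdNormalPDF_pos x).le
  linarith

theorem abs_mills_third_order_add_two_le {α : ℝ} (hα : 1 ≤ α) :
    |α ^ 3 * (α * stdNormalPDF α - (α ^ 2 + 1) * stdNormalCDF (-α)) / stdNormalPDF α + 2| ≤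
      27 / α ^ 2 := by
  have hα0 : 0 < α := by linarith
  have hp := stdNormalPDF_pos α
  set r := stdNormalCDF (-α) / stdNormalPDF α
  have hexpr :
      α ^ 3 * (α * stdNormalPDF α - (α ^ 2 + 1) * stdNormalCDF (-α)) / stdNormalPDF α =
        α ^ 4 - α ^ 3 * (α ^ 2 + 1) * r := by
    simp only [r]
    field_simp
  have hc : 0 ≤ α ^ 3 * (α ^ 2 + 1) := by positivity
  have hU : α ^ 3 * (α ^ 2 + 1) * r ≤ α ^ 4 + 2 + 3 * (α ^ 2)⁻¹ := by
    calc α ^ 3 * (α ^ 2 + 1) * r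
        ≤ α ^ 3 * (α ^ 2 + 1) * (α⁻¹ - (α ^ 3)⁻¹ + 3 * (α ^ 5)⁻¹) :=
          mul_le_mul_of_nonneg_left ((div_le_iff₀ hp).2 (stdNormalCDF_neg_le hα0)) hc
      _ = α ^ 4 + 2 + 3 * (α ^ 2)⁻¹ := by field_simp; ring
  have hL : α ^ 4 + 2 - 12 * (α ^ 2)⁻¹ - 15 * (α ^ 4)⁻¹ ≤ α ^ 3 * (α ^ 2 + 1) * r := by
    calc α ^ 4 + 2 - 12 * (α ^ 2)⁻¹ - 15 * (α ^ 4)⁻¹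
        = α ^ 3 * (α ^ 2 + 1) * (α⁻¹ - (α ^ 3)⁻¹ + 3 * (α ^ 5)⁻¹ - 15 * (α ^ 7)⁻¹) := by
          field_simp; ring
      _ ≤ α ^ 3 * (α ^ 2 + 1) * r :=
          mul_le_mul_of_nonneg_left ((le_div_iff₀ hp).2 (le_stdNormalCDF_neg hα0)) hc
  have h4 : (α ^ 4)⁻¹ ≤ (α ^ 2)⁻¹ :=
    inv_anti₀ (by positivity) (pow_le_pow_right₀ hα (by norm_num))
  have h2 : 0 ≤ (α ^ 2)⁻¹ := by positivity
  rw [hexpr, abs_le, div_eq_mul_inv]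
  constructor <;> linarith

theorem mills_ratio_limit_third_order :
    Tendsto
      (fun α : ℝ =>
        α ^ 3 * (α * stdNormalPDF α - (α ^ 2 + 1) * stdNormalCDF (-α)) / stdNormalPDF α)
      atTop (nhds (-2)) := by
  have hbound : Tendsto (fun α : ℝ => 27 / α ^ 2) atTop (𝓝 0) :=
    tendsto_const_nhds.div_atTop (tendsto_pow_atTop two_ne_zero)
  rw [tendsto_iff_norm_sub_tendsto_zero]
  refine squeeze_zero' (.of_forall fun _ => norm_nonneg _) ?_ hbound
  filter_upwards [eventually_ge_atTop 1] with α hα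
  simpa only [Real.norm_eq_abs, sub_neg_eq_add] using abs_mills_third_order_add_two_le hα
end

section
/- The limit as α → +∞ of α^2 · ( α^2 [φ(α) - αΦ(-α)] / φ(α) − 1 ) equals -3, where φ is the standard normal density and Φ the standard normal CDF. -/
open MeasureTheory Filter

/-!
Write `R(x) = Φ(-x)`. Repeated integration by parts gives the divergent asymptotic series
`R(x) / φ(x) ~ ∑ₖ cₖ x^{-(2k+1)}` with `cₖ = (-1)ᵏ (2k-1)!!`. Since `c_{k+1} = -(2k+1) cₖ`, its
partial sums `Sₙ` satisfy the telescoping identity `x Sₙ - Sₙ' - 1 = -cₙ x^{-2n}`, so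
`(R - φ Sₙ)' = -cₙ x^{-2n} φ` has the constant sign `(-1)^{n+1}` on `x > 0`. As `R - φ Sₙ → 0`
at infinity, consecutive partial sums bracket the Mills ratio: `S₄ ≤ R / φ ≤ S₃`. The residual
equals `α⁴ - α² - α⁵ R(α) / φ(α)`, and `α⁵ S₃ = α⁴ - α² + 3`, `α⁵ S₄ = α⁴ - α² + 3 - 15 α⁻²`,
so it is squeezed between `-3` and `-3 + 15 α⁻²`.
-/

open Set Topology

lemma stdNormalPDF_eq_gaussianPDFReal : stdNormalPDF = ProbabilityTheory.gaussianPDFReal 0 1 := by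
  ext x
  simp [stdNormalPDF, ProbabilityTheory.gaussianPDFReal]

lemma tendsto_stdNormalPDF_atTop : Tendsto stdNormalPDF atTop (𝓝 0) := by
  unfold stdNormalPDF
  have h : Tendsto (fun x : ℝ => -(x ^ 2) / 2) atTop atBot :=
    (tendsto_neg_atTop_atBot.comp (tendsto_pow_atTop two_ne_zero)).atBot_div_const two_pos
  simpa using (Real.tendsto_exp_atBot.comp h).const_mul (Real.sqrt (2 * Real.pi))⁻¹

lemma tendsto_stdNormalCDF_neg_atTop : Tendsto (fun x => stdNormalCDF (-x)) atTop (𝓝 0) := by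
  have h := tendsto_setIntegral_of_antitone (μ := volume) (f := stdNormalPDF)
    (s := fun x : ℝ => Iic (-x)) (fun _ => measurableSet_Iic)
    (fun _ _ hxy => Iic_subset_Iic.mpr (neg_le_neg hxy)) ⟨0, integrable_stdNormalPDF.integrableOn⟩
  have hempty : (⋂ x : ℝ, Iic (-x)) = ∅ :=
    eq_empty_of_forall_notMem fun t ht => by
      have := mem_iInter.mp ht (-t + 1)
      simp only [neg_add_rev, neg_neg, mem_Iic] at this
      linarith
  simpa only [hempty, Measure.restrict_empty, integral_zero_measure, stdNormalCDF] using h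

lemma MonotoneOn.nonpos_of_tendsto_zero {f : ℝ → ℝ} {a x : ℝ} (hf : MonotoneOn f (Ioi a))
    (hlim : Tendsto f atTop (𝓝 0)) (hx : a < x) : f x ≤ 0 :=
  ge_of_tendsto hlim <| (eventually_ge_atTop x).mono fun _ hy => hf hx (hx.trans_le hy) hy

lemma monotoneOn_Ioi_of_hasDerivAt_nonneg {f f' : ℝ → ℝ} {a : ℝ}
    (hf : ∀ x ∈ Ioi a, HasDerivAt f (f' x) x) (hf' : ∀ x ∈ Ioi a, 0 ≤ f' x) :
    MonotoneOn f (Ioi a) :=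
  monotoneOn_of_hasDerivWithinAt_nonneg (convex_Ioi a)
    (fun x hx => (hf x hx).continuousAt.continuousWithinAt)
    (by simpa only [interior_Ioi] using fun x hx => (hf x hx).hasDerivWithinAt)
    (by simpa only [interior_Ioi] using hf')

noncomputable def millsCoeff (k : ℕ) : ℝ := (-1) ^ k * ∏ j ∈ Finset.range k, (2 * j + 1 : ℝ)

noncomputable def millsSeries (n : ℕ) (x : ℝ) : ℝ :=
  ∑ k ∈ Finset.range n, millsCoeff k * x⁻¹ ^ (2 * k + 1)

lemma millsCoeff_succ (k : ℕ) : millsCoeff (k + 1) = -(2 * k + 1) * millsCoeff k := by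
  simp only [millsCoeff, pow_succ, Finset.prod_range_succ]
  ring

lemma hasDerivAt_millsSeries (n : ℕ) {x : ℝ} (hx : x ≠ 0) :
    HasDerivAt (millsSeries n)
      (-∑ k ∈ Finset.range n, (2 * k + 1) * millsCoeff k * x⁻¹ ^ (2 * k + 2)) x := by
  have hterm (k : ℕ) : HasDerivAt (fun y => millsCoeff k * y⁻¹ ^ (2 * k + 1))
      (-((2 * k + 1) * millsCoeff k * x⁻¹ ^ (2 * k + 2))) x := by
    refine (((hasDerivAt_inv hx).pow (2 * k + 1)).const_mul (millsCoeff k)).congr_deriv ?_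
    rw [pow_add, ← inv_pow]
    push_cast
    ring
  rw [← Finset.sum_neg_distrib]
  exact HasDerivAt.fun_sum fun k _ => hterm k

lemma mul_millsSeries_add_sum_sub_one (n : ℕ) {x : ℝ} (hx : x ≠ 0) :
    x * millsSeries n x + ∑ k ∈ Finset.range n, (2 * k + 1) * millsCoeff k * x⁻¹ ^ (2 * k + 2) - 1
      = -millsCoeff n * x⁻¹ ^ (2 * n) := by
  induction n with
  | zero => simp [millsSeries, millsCoeff]
  | succ n ih =>
    have hx' : x * x⁻¹ ^ (2 * n + 1) = x⁻¹ ^ (2 * n) := by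
      rw [pow_succ, ← mul_assoc, mul_comm x, mul_assoc, mul_inv_cancel₀ hx, mul_one]
    simp only [millsSeries, Finset.sum_range_succ] at ih ⊢
    rw [millsCoeff_succ]
    linear_combination ih + millsCoeff n * hx'

lemma tendsto_millsSeries_atTop (n : ℕ) : Tendsto (millsSeries n) atTop (𝓝 0) := by
  have hzero : ∑ k ∈ Finset.range n, millsCoeff k * (0 : ℝ) ^ (2 * k + 1) = 0 := by simp
  rw [← hzero]
  exact tendsto_finsetSum _ fun k _ =>
    (tendsto_inv_atTop_zero.pow (2 * k + 1)).const_mul (millsCoeff k)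

lemma hasDerivAt_stdNormalCDF_neg_sub_mul_millsSeries (n : ℕ) {x : ℝ} (hx : x ≠ 0) :
    HasDerivAt (fun y => stdNormalCDF (-y) - stdNormalPDF y * millsSeries n y)
      (-millsCoeff n * x⁻¹ ^ (2 * n) * stdNormalPDF x) x := by
  have htail : HasDerivAt (fun y => stdNormalCDF (-y)) (-stdNormalPDF x) x := by
    simpa [stdNormalPDF_neg, Function.comp_def] using
      (hasDerivAt_stdNormalCDF (-x)).comp x (hasDerivAt_neg x)
  refine (htail.sub ((hasDerivAt_stdNormalPDF x).mul (hasDerivAt_millsSeries n hx))).congr_deriv ?_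
  rw [← mul_millsSeries_add_sum_sub_one n hx]
  ring

lemma tendsto_stdNormalCDF_neg_sub_mul_millsSeries (n : ℕ) :
    Tendsto (fun y => stdNormalCDF (-y) - stdNormalPDF y * millsSeries n y) atTop (𝓝 0) := by
  simpa using tendsto_stdNormalCDF_neg_atTop.sub
    (tendsto_stdNormalPDF_atTop.mul (tendsto_millsSeries_atTop n))

theorem stdNormalCDF_neg_le_stdNormalPDF_mul_millsSeries {n : ℕ} (hn : Odd n) {x : ℝ}
    (hx : 0 < x) : stdNormalCDF (-x) ≤ stdNormalPDF x * millsSeries n x := by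
  have hmono := monotoneOn_Ioi_of_hasDerivAt_nonneg
    (fun y hy => hasDerivAt_stdNormalCDF_neg_sub_mul_millsSeries n (ne_of_gt hy)) fun y hy => ?_
  · simpa [sub_nonpos] using hmono.nonpos_of_tendsto_zero
      (tendsto_stdNormalCDF_neg_sub_mul_millsSeries n) hx
  · have hcoeff : millsCoeff n ≤ 0 := by
      simp only [millsCoeff, hn.neg_one_pow, neg_one_mul, neg_nonpos]
      positivity
    have hy : 0 < y := hy
    exact mul_nonneg (mul_nonneg (neg_nonneg.mpr hcoeff) (by positivity)) (stdNormalPDF_pos y).le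

theorem stdNormalPDF_mul_millsSeries_le_stdNormalCDF_neg {n : ℕ} (hn : Even n) {x : ℝ}
    (hx : 0 < x) : stdNormalPDF x * millsSeries n x ≤ stdNormalCDF (-x) := by
  have hmono := monotoneOn_Ioi_of_hasDerivAt_nonneg
    (fun y hy => (hasDerivAt_stdNormalCDF_neg_sub_mul_millsSeries n (ne_of_gt hy)).fun_neg)
    fun y hy => ?_
  · simpa [sub_nonpos] using hmono.nonpos_of_tendsto_zero
      (by simpa using (tendsto_stdNormalCDF_neg_sub_mul_millsSeries n).neg) hx
  · have hcoeff : 0 ≤ millsCoeff n := by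
      simp only [millsCoeff, hn.neg_one_pow, one_mul]
      positivity
    have hy : 0 < y := hy
    simpa only [neg_mul, neg_neg] using
      mul_nonneg (mul_nonneg hcoeff (by positivity)) (stdNormalPDF_pos y).le

lemma millsSeries_three (x : ℝ) : millsSeries 3 x = x⁻¹ - x⁻¹ ^ 3 + 3 * x⁻¹ ^ 5 := by
  simp [millsSeries, millsCoeff, Finset.sum_range_succ, Finset.prod_range_succ]
  ring

lemma millsSeries_four (x : ℝ) :
    millsSeries 4 x = x⁻¹ - x⁻¹ ^ 3 + 3 * x⁻¹ ^ 5 - 15 * x⁻¹ ^ 7 := by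
  simp [millsSeries, millsCoeff, Finset.sum_range_succ, Finset.prod_range_succ]
  ring

theorem mills_ratio_second_order_residual :
    Tendsto
      (fun α : ℝ =>
        α ^ 2 * (α ^ 2 * (stdNormalPDF α - α * stdNormalCDF (-α)) / stdNormalPDF α - 1))
      atTop (nhds (-3)) := by
  have hupper : Tendsto (fun α : ℝ => -3 + 15 * α⁻¹ ^ 2) atTop (𝓝 (-3)) := by
    simpa using ((tendsto_inv_atTop_zero.pow 2).const_mul 15).const_add (-3 : ℝ)
  refine tendsto_of_tendsto_of_tendsto_of_le_of_le' tendsto_const_nhds hupper ?_ ?_ <;>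
    filter_upwards [eventually_gt_atTop 0] with α hα <;>
    rw [div_sub_one (stdNormalPDF_pos α).ne', mul_div_assoc']
  · have h := stdNormalCDF_neg_le_stdNormalPDF_mul_millsSeries (by decide : Odd 3) hα
    rw [millsSeries_three] at h
    have h5 := mul_le_mul_of_nonneg_left h (pow_pos hα 5).le
    field_simp at h5
    rw [le_div_iff₀ (stdNormalPDF_pos α)]
    linear_combination h5
  · have h := stdNormalPDF_mul_millsSeries_le_stdNormalCDF_neg (by decide : Even 4) hα
    rw [millsSeries_four] at h
    have h7 := mul_le_mul_of_nonneg_left h (pow_pos hα 7).le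
    field_simp at h7 ⊢
    rw [div_le_iff₀ (stdNormalPDF_pos α)]
    linear_combination h7
end

section
/- The limit as α → +∞ of α^2 · ( α^3 [αφ(α) - (α^2+1)Φ(-α)] / φ(α) + 2 ) equals 12, where φ is the standard normal density and Φ the standard normal CDF. -/
open MeasureTheory Filter

/-!
Integrating by parts against `t φ(t) = -φ'(t)` gives, for `a > 0`,
`∫_a^∞ φ(t)/tⁿ dt = φ(a)/aⁿ⁺¹ - (n+1) ∫_a^∞ φ(t)/tⁿ⁺² dt`, and hence also
`0 ≤ ∫_a^∞ φ(t)/tⁿ dt ≤ φ(a)/aⁿ⁺¹`. Four steps of this recursion give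
`Φ(-a) = φ(a) (1/a - 1/a³ + 3/a⁵ - 15/a⁷ + 105 r/a⁹)` with `0 ≤ r ≤ 1`, and substituting this
into the expression turns it into `12 + 15/a² - 105 r (1/a² + 1/a⁴)`.
-/

open Set Topology

lemma stdNormalCDF_neg (a : ℝ) : stdNormalCDF (-a) = ∫ t in Ioi a, stdNormalPDF t := by
  rw [stdNormalCDF, ← integral_comp_neg_Ioi]
  simp only [stdNormalPDF_neg]

section TailIntegrals

variable (n : ℕ) {a : ℝ}

lemma integrableOn_stdNormalPDF_div_pow (ha : 0 < a) :
    IntegrableOn (fun t => stdNormalPDF t / t ^ n) (Ioi a) := by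
  refine (integrable_stdNormalPDF.integrableOn.const_mul (a ^ n)⁻¹).mono' ?_ ?_
  · exact (continuous_stdNormalPDF.measurable.div (measurable_id.pow_const n)).aestronglyMeasurable
  · refine (ae_restrict_iff' measurableSet_Ioi).2 (.of_forall fun t (ht : a < t) => ?_)
    rw [Real.norm_of_nonneg (div_nonneg (stdNormalPDF_pos t).le (pow_pos (ha.trans ht) n).le),
      div_eq_inv_mul]
    gcongr
    exact (stdNormalPDF_pos t).le

lemma hasDerivAt_neg_stdNormalPDF_div_pow {t : ℝ} (ht : t ≠ 0) :
    HasDerivAt (fun s => -(stdNormalPDF s / s ^ (n + 1)))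
      (stdNormalPDF t / t ^ n + (n + 1) * (stdNormalPDF t / t ^ (n + 2))) t := by
  refine ((hasDerivAt_stdNormalPDF t).div (hasDerivAt_pow (n + 1) t)
    (pow_ne_zero _ ht)).neg.congr_deriv ?_
  field_simp
  push_cast
  ring

lemma integral_Ioi_stdNormalPDF_div_pow (ha : 0 < a) :
    ∫ t in Ioi a, stdNormalPDF t / t ^ n =
      stdNormalPDF a / a ^ (n + 1) - (n + 1) * ∫ t in Ioi a, stdNormalPDF t / t ^ (n + 2) := by
  have hint := integrableOn_stdNormalPDF_div_pow n ha
  have hint₂ := (integrableOn_stdNormalPDF_div_pow (n + 2) ha).const_mul ((n : ℝ) + 1)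
  have hftc := integral_Ioi_of_hasDerivAt_of_tendsto
    (hasDerivAt_neg_stdNormalPDF_div_pow n ha.ne').continuousAt.continuousWithinAt
    (fun t (ht : a < t) => hasDerivAt_neg_stdNormalPDF_div_pow n (ha.trans ht).ne')
    (hint.add hint₂)
    (by simpa using (tendsto_stdNormalPDF_atTop.div_atTop (tendsto_pow_atTop n.succ_ne_zero)).neg)
  rw [integral_add hint hint₂, integral_const_mul] at hftc
  linarith

lemma integral_Ioi_stdNormalPDF_div_pow_nonneg (ha : 0 < a) :
    0 ≤ ∫ t in Ioi a, stdNormalPDF t / t ^ n :=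
  setIntegral_nonneg measurableSet_Ioi fun t (ht : a < t) =>
    div_nonneg (stdNormalPDF_pos t).le (pow_pos (ha.trans ht) n).le

lemma integral_Ioi_stdNormalPDF_div_pow_le (ha : 0 < a) :
    ∫ t in Ioi a, stdNormalPDF t / t ^ n ≤ stdNormalPDF a / a ^ (n + 1) := by
  rw [integral_Ioi_stdNormalPDF_div_pow n ha]
  exact sub_le_self _ (mul_nonneg (by positivity) (integral_Ioi_stdNormalPDF_div_pow_nonneg _ ha))

end TailIntegrals

lemma exists_stdNormalCDF_neg_eq {a : ℝ} (ha : 0 < a) :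
    ∃ r ∈ Icc (0 : ℝ) 1, stdNormalCDF (-a) =
      stdNormalPDF a * (1 / a - 1 / a ^ 3 + 3 / a ^ 5 - 15 / a ^ 7 + 105 * r / a ^ 9) := by
  have hφ := stdNormalPDF_pos a
  refine ⟨a ^ 9 * (∫ t in Ioi a, stdNormalPDF t / t ^ 8) / stdNormalPDF a, ⟨?_, ?_⟩, ?_⟩
  · have := integral_Ioi_stdNormalPDF_div_pow_nonneg 8 ha
    positivity
  · rw [div_le_one hφ, ← le_div_iff₀' (by positivity)]
    exact integral_Ioi_stdNormalPDF_div_pow_le 8 ha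
  · have h0 := integral_Ioi_stdNormalPDF_div_pow 0 ha
    simp only [pow_zero, div_one] at h0
    rw [stdNormalCDF_neg, h0, integral_Ioi_stdNormalPDF_div_pow 2 ha,
      integral_Ioi_stdNormalPDF_div_pow 4 ha, integral_Ioi_stdNormalPDF_div_pow 6 ha]
    field_simp
    push_cast
    ring

theorem mills_ratio_third_order_residual :
    Tendsto
      (fun α : ℝ =>
        α ^ 2 *
          (α ^ 3 * (α * stdNormalPDF α - (α ^ 2 + 1) * stdNormalCDF (-α)) / stdNormalPDF α + 2))
      atTop (nhds 12) := by
  choose! r hr hexp using fun a (ha : 0 < a) => exists_stdNormalCDF_neg_eq ha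
  have heq : ∀ᶠ α in atTop,
      α ^ 2 * (α ^ 3 * (α * stdNormalPDF α - (α ^ 2 + 1) * stdNormalCDF (-α)) / stdNormalPDF α + 2)
        = 12 + 15 * α⁻¹ ^ 2 - 105 * ((α⁻¹ ^ 2 + α⁻¹ ^ 4) * r α) := by
    filter_upwards [eventually_gt_atTop 0] with α hα
    have hφ := (stdNormalPDF_pos α).ne'
    rw [hexp α hα]
    field_simp
    ring
  have hinv : Tendsto (fun α : ℝ => α⁻¹) atTop (𝓝 0) := tendsto_inv_atTop_zero
  have hrem : Tendsto (fun α => (α⁻¹ ^ 2 + α⁻¹ ^ 4) * r α) atTop (𝓝 0) := by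
    refine Tendsto.zero_mul_isBoundedUnder_le ?_ (isBoundedUnder_of_eventually_le (a := 1) ?_)
    · simpa using (hinv.pow 2).add (hinv.pow 4)
    · filter_upwards [eventually_gt_atTop 0] with α hα
      obtain ⟨h0, h1⟩ := hr α hα
      simpa [abs_of_nonneg h0] using h1
  rw [tendsto_congr' heq]
  simpa using (((hinv.pow 2).const_mul 15).const_add 12).sub (hrem.const_mul 105)
end
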